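/- Let s be a simple object in the finite-length heart A of a bounded t-structure on C. Then s[-1] is a simple object of the left tilt L_s A = ⟨⟨s⟩^⊥, ⟨s⟩[-1]⟩, and every other simple object of L_s A lies in ⟨s⟩^⊥. -/

import Mathlib

open CategoryTheory Category Limits Pretriangulated

universe v u

variable (C : Type u) [Category.{v} C] [HasZeroObject C] [HasShift C ℤ]
  [Preadditive C] [∀ n : ℤ, (CategoryTheory.shiftFunctor C n).Additive] [Pretriangulated C]

namespace Paper

/-- The right perpendicular of a set of objects. -/
def perpSet (D : Set C) : Set C := {c | ∀ d ∈ D, ∀ φ : d ⟶ c, φ = 0}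

/-- A `t`-structure given by its aisle `D`. -/
structure IsTStructure (D : Set C) : Prop where
  isoClosed : ∀ {x y : C}, (x ≅ y) → x ∈ D → y ∈ D
  shift_mem : ∀ d ∈ D, d⟦(1 : ℤ)⟧ ∈ D
  exists_triangle : ∀ c : C, ∃ d ∈ D, ∃ d' ∈ perpSet C D,
    ∃ (f : d ⟶ c) (g : c ⟶ d') (h : d' ⟶ d⟦(1 : ℤ)⟧),
      Triangle.mk f g h ∈ distTriang C

/-- The shift `S[n]` of a set of objects. -/
def shiftSet (S : Set C) (n : ℤ) : Set C := {c | c⟦(-n : ℤ)⟧ ∈ S}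

/-- The heart `D ∩ D^⊥[1]` of a `t`-structure. -/
def heartSet (D : Set C) : Set C := {c | c ∈ D ∧ c⟦(-1 : ℤ)⟧ ∈ perpSet C D}

/-- Boundedness: every object lies in `D[-n] ∩ D^⊥[n]` for some `n`. -/
def IsBounded (D : Set C) : Prop :=
  ∀ c : C, ∃ n : ℕ, c⟦(n : ℤ)⟧ ∈ D ∧ c⟦(-(n : ℤ))⟧ ∈ perpSet C D

/-- A short exact sequence `0 → t → a → f → 0` in the heart `A`, encoded as a
distinguished triangle `t → a → f → t[1]` whose objects all lie in `A`. -/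
def heartTriangle (A : Set C) (t a f : C) : Prop :=
  t ∈ A ∧ a ∈ A ∧ f ∈ A ∧
    ∃ (i : t ⟶ a) (p : a ⟶ f) (h : f ⟶ t⟦(1 : ℤ)⟧), Triangle.mk i p h ∈ distTriang C

/-- `x` is a simple object of the heart `A`. -/
def SimpleIn (A : Set C) (x : C) : Prop :=
  x ∈ A ∧ ¬ IsZero x ∧ ∀ t f : C, heartTriangle C A t x f → IsZero t ∨ IsZero f

/-- The extension-closed subcategory of `C` generated by `S`. -/
inductive ExtClosure (S : Set C) : C → Prop
  | of {c : C} (h : c ∈ S) : ExtClosure S c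
  | zero {c : C} (h : IsZero c) : ExtClosure S c
  | iso {x y : C} (e : x ≅ y) (h : ExtClosure S x) : ExtClosure S y
  | ext {a b c : C} (f : a ⟶ b) (g : b ⟶ c) (h : c ⟶ a⟦(1 : ℤ)⟧)
      (hT : Triangle.mk f g h ∈ distTriang C)
      (ha : ExtClosure S a) (hc : ExtClosure S c) : ExtClosure S b

/-- The extension closure of `S` inside the heart `A`. -/
inductive HeartExt (A : Set C) (S : Set C) : C → Prop
  | of {c : C} (h : c ∈ S) : HeartExt A S c
  | zero {c : C} (h : IsZero c) (hA : c ∈ A) : HeartExt A S c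
  | iso {x y : C} (e : x ≅ y) (hy : y ∈ A) (h : HeartExt A S x) : HeartExt A S y
  | ext {t a f : C} (ht : HeartExt A S t) (hf : HeartExt A S f)
      (h : heartTriangle C A t a f) : HeartExt A S a

/-- A torsion pair `(T, F)` in the heart `A`. -/
structure TorsionPairIn (A T F : Set C) : Prop where
  subT : T ⊆ A
  subF : F ⊆ A
  isoT : ∀ {x y : C}, (x ≅ y) → x ∈ T → y ∈ T
  isoF : ∀ {x y : C}, (x ≅ y) → x ∈ F → y ∈ F
  hom_zero : ∀ t ∈ T, ∀ f ∈ F, ∀ φ : t ⟶ f, φ = 0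
  exists_ses : ∀ a ∈ A, ∃ t ∈ T, ∃ f ∈ F, heartTriangle C A t a f

/-- The perpendicular of `T` taken inside the heart `A`. -/
def perpIn (A T : Set C) : Set C := {a | a ∈ A ∧ ∀ t ∈ T, ∀ φ : t ⟶ a, φ = 0}

/-- The left tilt `⟨F, T[-1]⟩` of the heart `A` at a torsion class `T` (with `F = T^⊥ ∩ A`). -/
def leftTilt (A T : Set C) : Set C :=
  {c | ExtClosure C (perpIn C A T ∪ shiftSet C T (-1)) c}

/-- Objects of the heart `A` with a finite composition series. -/
inductive FiniteLengthIn (A : Set C) : C → Prop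
  | zero {a : C} (h : IsZero a) : FiniteLengthIn A a
  | step {s a q : C} (hs : SimpleIn C A s) (hq : FiniteLengthIn A q)
      (ht : heartTriangle C A s a q) : FiniteLengthIn A a

/-!
Objects of the tilt have `A`-cohomology only in degrees `0` and `1`. For a triangle
`t ⟶ s⟦-1⟧ ⟶ f ⟶ t⟦1⟧` in the tilt, `t` has no `H⁰`, and the `H⁰` of `f` is a subobject of
`t⟦1⟧` lying in `s^⊥`. Since `t⟦1⟧` admits no nonzero map to `s^⊥`, such a subobject vanishes:
by induction on length, divide `t⟦1⟧` by a copy of `s` and use Schur's lemma together with a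
Jordan–Hölder type count of lengths. Shifting the triangle then gives a short exact sequence
`t⟦1⟧ ↪ s ↠ f⟦1⟧` in `A`, and simplicity of `s` concludes. Conversely, a simple object of an
extension closure is isomorphic to one of the generators, and a simple object of the form
`τ⟦-1⟧` with `τ ∈ ⟨s⟩` forces `τ ≅ s`.
-/

variable {C}

section Shift

omit [HasZeroObject C] [Pretriangulated C]

lemma isZero_of_isZero_shift {x : C} (n : ℤ) (h : IsZero (x⟦n⟧)) : IsZero x :=
  ((shiftFunctor C (-n)).map_isZero h).of_iso (shiftShiftNeg x n).symm

lemma hom_shift_neg_one_eq_zero {z y : C} (h : ∀ φ : z⟦(1 : ℤ)⟧ ⟶ y, φ = 0)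
    (φ : z ⟶ y⟦(-1 : ℤ)⟧) : φ = 0 := by
  apply (shiftFunctor C (1 : ℤ)).map_injective
  rw [Functor.map_zero, ← cancel_mono (shiftNegShift y (1 : ℤ)).hom, zero_comp]
  exact h _

lemma hom_shift_one_eq_zero {z y : C} (h : ∀ φ : z ⟶ y⟦(-1 : ℤ)⟧, φ = 0)
    (φ : z⟦(1 : ℤ)⟧ ⟶ y) : φ = 0 := by
  apply (shiftFunctor C (-1 : ℤ)).map_injective
  rw [Functor.map_zero, ← cancel_epi (shiftShiftNeg z (1 : ℤ)).inv, comp_zero]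
  exact h _

end Shift

lemma hom_obj₂_eq_zero_of_distTriang {T : Triangle C} (hT : T ∈ distTriang C) {y : C}
    (h₁ : ∀ φ : T.obj₁ ⟶ y, φ = 0) (h₃ : ∀ φ : T.obj₃ ⟶ y, φ = 0) (φ : T.obj₂ ⟶ y) :
    φ = 0 := by
  obtain ⟨ψ, rfl⟩ := Triangle.yoneda_exact₂ T hT φ (h₁ _)
  rw [h₃ ψ, comp_zero]

lemma hom_obj₃_eq_zero_of_distTriang {T : Triangle C} (hT : T ∈ distTriang C) {y : C}
    (h₁ : ∀ φ : T.obj₁⟦(1 : ℤ)⟧ ⟶ y, φ = 0) (h₂ : ∀ φ : T.obj₂ ⟶ y, φ = 0)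
    (φ : T.obj₃ ⟶ y) : φ = 0 := by
  obtain ⟨ψ, rfl⟩ := Triangle.yoneda_exact₃ T hT φ (h₂ _)
  rw [h₁ ψ, comp_zero]

lemma cancel_mor₂_of_distTriang {T : Triangle C} (hT : T ∈ distTriang C) {w : C}
    (hw : ∀ φ : T.obj₁⟦(1 : ℤ)⟧ ⟶ w, φ = 0) {g g' : T.obj₃ ⟶ w}
    (h : T.mor₂ ≫ g = T.mor₂ ≫ g') : g = g' := by
  rw [← sub_eq_zero] at h ⊢
  obtain ⟨ψ, hψ⟩ := Triangle.yoneda_exact₃ T hT (g - g') (by rwa [Preadditive.comp_sub])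
  rw [hψ, hw ψ, comp_zero]

section Perp

variable {S : Set C}

section

omit [HasZeroObject C] [HasShift C ℤ] [∀ n : ℤ, (shiftFunctor C n).Additive]
  [Pretriangulated C]

lemma mem_perpSet_of_iso {x y : C} (e : x ≅ y) (hx : x ∈ perpSet C S) : y ∈ perpSet C S :=
  fun d hd φ => by simpa using congrArg (· ≫ e.hom) (hx d hd (φ ≫ e.inv))

lemma zero_mem_perpSet {x : C} (hx : IsZero x) : x ∈ perpSet C S :=
  fun _ _ φ => hx.eq_of_tgt φ 0

end

omit [HasZeroObject C] [Preadditive C] [∀ n : ℤ, (shiftFunctor C n).Additive]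
  [Pretriangulated C] in
lemma mem_shiftSet_neg_one_iff {x : C} : x ∈ shiftSet C S (-1) ↔ x⟦(1 : ℤ)⟧ ∈ S := by
  simp [shiftSet]

lemma mem_perpSet_of_distTriang {T : Triangle C} (hT : T ∈ distTriang C)
    (h₁ : T.obj₁ ∈ perpSet C S) (h₃ : T.obj₃ ∈ perpSet C S) : T.obj₂ ∈ perpSet C S := by
  intro d hd φ
  obtain ⟨ψ, rfl⟩ := Triangle.coyoneda_exact₂ T hT φ (h₃ d hd _)
  rw [h₁ d hd ψ, zero_comp]

end Perp

namespace IsTStructure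

variable {D : Set C}

lemma shift_neg_one_mem_perpSet (hD : IsTStructure C D) {y : C} (hy : y ∈ perpSet C D) :
    y⟦(-1 : ℤ)⟧ ∈ perpSet C D :=
  fun d hd => hom_shift_neg_one_eq_zero (hy _ (hD.shift_mem d hd))

lemma mem_of_forall_hom_eq_zero (hD : IsTStructure C D) {x : C}
    (h : ∀ y ∈ perpSet C D, ∀ φ : x ⟶ y, φ = 0) : x ∈ D := by
  obtain ⟨d, hd, d', hd', f, g, δ, hT⟩ := hD.exists_triangle x
  have hg : g = 0 := h d' hd' g
  obtain ⟨ψ, hψ⟩ := Triangle.yoneda_exact₂ _ (rot_of_distTriang _ hT) (𝟙 d')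
    (by rw [hg]; exact zero_comp)
  have hψ0 : ψ = 0 := hd' _ (hD.shift_mem d hd) ψ
  have hd'0 : IsZero d' := by rw [IsZero.iff_id_eq_zero, hψ, hψ0]; exact comp_zero
  have : IsIso f := (Triangle.isZero₃_iff_isIso₁ _ hT).1 hd'0
  exact hD.isoClosed (asIso f) hd

lemma zero_mem (hD : IsTStructure C D) {x : C} (hx : IsZero x) : x ∈ D :=
  hD.mem_of_forall_hom_eq_zero fun _ _ φ => hx.eq_of_src φ 0

lemma mem_of_distTriang (hD : IsTStructure C D) {T : Triangle C} (hT : T ∈ distTriang C)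
    (h₁ : T.obj₁ ∈ D) (h₃ : T.obj₃ ∈ D) : T.obj₂ ∈ D :=
  hD.mem_of_forall_hom_eq_zero fun _ hy =>
    hom_obj₂_eq_zero_of_distTriang hT (hy _ h₁) (hy _ h₃)

lemma mem_heartSet_of_iso (hD : IsTStructure C D) {x y : C} (e : x ≅ y)
    (hx : x ∈ heartSet C D) : y ∈ heartSet C D :=
  ⟨hD.isoClosed e hx.1, mem_perpSet_of_iso ((shiftFunctor C (-1 : ℤ)).mapIso e) hx.2⟩

lemma shift_neg_one_mem_perpSet_of_distTriang (hD : IsTStructure C D) {T : Triangle C}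
    (hT : T ∈ distTriang C) (h₂ : T.obj₂⟦(-1 : ℤ)⟧ ∈ perpSet C D)
    (h₃ : T.obj₃⟦(-1 : ℤ)⟧ ∈ perpSet C D) : T.obj₁⟦(-1 : ℤ)⟧ ∈ perpSet C D :=
  mem_perpSet_of_distTriang (inv_rot_of_distTriang _ (Triangle.shift_distinguished _ hT (-1)))
    (hD.shift_neg_one_mem_perpSet h₃) h₂

lemma exists_distTriang_heartSet (hD : IsTStructure C D) {x : C}
    (hx : x⟦(-1 : ℤ)⟧ ∈ perpSet C D) :
    ∃ (K d' : C) (α : K ⟶ x) (β : x ⟶ d') (γ : d' ⟶ K⟦(1 : ℤ)⟧),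
      Triangle.mk α β γ ∈ distTriang C ∧ K ∈ heartSet C D ∧ d' ∈ perpSet C D := by
  obtain ⟨K, hK, d', hd', α, β, γ, hT⟩ := hD.exists_triangle x
  exact ⟨K, d', α, β, γ, hT,
    ⟨hK, hD.shift_neg_one_mem_perpSet_of_distTriang hT hx (hD.shift_neg_one_mem_perpSet hd')⟩, hd'⟩

end IsTStructure

section

omit [HasZeroObject C] [∀ n : ℤ, (shiftFunctor C n).Additive] [Pretriangulated C]

lemma shift_one_mem_heartSet {D : Set C} {x : C} (h₁ : x⟦(1 : ℤ)⟧ ∈ D)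
    (h₂ : x ∈ perpSet C D) : x⟦(1 : ℤ)⟧ ∈ heartSet C D :=
  ⟨h₁, mem_perpSet_of_iso (shiftShiftNeg x (1 : ℤ)).symm h₂⟩

lemma mem_perpSet_of_shift_one_mem_heartSet {D : Set C} {x : C}
    (h : x⟦(1 : ℤ)⟧ ∈ heartSet C D) : x ∈ perpSet C D :=
  mem_perpSet_of_iso (shiftShiftNeg x (1 : ℤ)) h.2

end

lemma distTriang_of_iso_obj₂ {t x y f : C} (e : x ≅ y) {i : t ⟶ x} {p : x ⟶ f}
    {δ : f ⟶ t⟦(1 : ℤ)⟧} (hT : Triangle.mk i p δ ∈ distTriang C) :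
    Triangle.mk (i ≫ e.hom) (e.inv ≫ p) δ ∈ distTriang C :=
  isomorphic_distinguished _ hT _ <| Triangle.isoMk _ _ (Iso.refl _) e.symm (Iso.refl _)
    (by show (i ≫ e.hom) ≫ e.inv = 𝟙 _ ≫ i; simp)
    (by show (e.inv ≫ p) ≫ 𝟙 _ = e.inv ≫ p; simp)
    (by show δ ≫ (shiftFunctor C 1).map (𝟙 _) = 𝟙 _ ≫ δ; simp)

omit [HasShift C ℤ] [HasZeroObject C] [∀ n : ℤ, (shiftFunctor C n).Additive]
  [Pretriangulated C] in
lemma comp_comp_eq_zero {w x y z : C} (φ : w ⟶ x) {f : x ⟶ y} {g : y ⟶ z} (h : f ≫ g = 0) :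
    (φ ≫ f) ≫ g = 0 := by
  rw [assoc, h, comp_zero]

section Simple

variable {S : Set C}

lemma isZero_or_isZero_of_simpleIn {T : Triangle C} (hT : T ∈ distTriang C)
    (hx : SimpleIn C S T.obj₂) (h₁ : T.obj₁ ∈ S) (h₃ : T.obj₃ ∈ S) :
    IsZero T.obj₁ ∨ IsZero T.obj₃ :=
  hx.2.2 _ _ ⟨h₁, hx.1, h₃, T.mor₁, T.mor₂, T.mor₃, hT⟩

lemma SimpleIn.of_iso {x y : C} (e : x ≅ y) (hx : x ∈ S) (hy : SimpleIn C S y) :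
    SimpleIn C S x := by
  refine ⟨hx, fun h => hy.2.1 (h.of_iso e.symm), fun t f ⟨ht, _, hf, i, p, δ, hT⟩ => ?_⟩
  exact isZero_or_isZero_of_simpleIn (distTriang_of_iso_obj₂ e hT) hy ht hf

end Simple

/-- Between objects of the heart, this says that `m` is a monomorphism of the heart. -/
def AisleMono (D : Set C) {x y : C} (m : x ⟶ y) : Prop :=
  ∀ z ∈ D, ∀ φ : z ⟶ x, φ ≫ m = 0 → φ = 0

section AisleMono

variable {D : Set C}

lemma aisleMono_mor₁ {T : Triangle C} (hT : T ∈ distTriang C)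
    (h₃ : T.obj₃⟦(-1 : ℤ)⟧ ∈ perpSet C D) : AisleMono D T.mor₁ := by
  intro z hz φ hφ
  obtain ⟨g, hg⟩ := Triangle.coyoneda_exact₂ _ (inv_rot_of_distTriang _ hT) φ hφ
  have : g = 0 := h₃ z hz g
  rw [hg, this]; exact zero_comp

section

omit [HasZeroObject C] [HasShift C ℤ] [∀ n : ℤ, (shiftFunctor C n).Additive]
  [Pretriangulated C]

lemma AisleMono.comp {x y w : C} {f : x ⟶ y} {g : y ⟶ w} (hf : AisleMono D f)
    (hg : AisleMono D g) : AisleMono D (f ≫ g) :=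
  fun z hz φ h => hf z hz φ (hg z hz _ (by rwa [assoc]))

lemma AisleMono.ne_zero {x y : C} {m : x ⟶ y} (hm : AisleMono D m) (hx : x ∈ D)
    (hx0 : ¬ IsZero x) : m ≠ 0 := fun h =>
  hx0 (by rw [IsZero.iff_id_eq_zero]; exact hm x hx _ (by rw [h, comp_zero]))

end

lemma IsTStructure.cone_mem_heartSet (hD : IsTStructure C D) {x y c : C} {m : x ⟶ y}
    {n : y ⟶ c} {o : c ⟶ x⟦(1 : ℤ)⟧} (hT : Triangle.mk m n o ∈ distTriang C)
    (hx : x ∈ heartSet C D) (hy : y ∈ heartSet C D) (hm : AisleMono D m) :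
    c ∈ heartSet C D := by
  constructor
  · refine hD.mem_of_forall_hom_eq_zero fun w hw φ => ?_
    obtain ⟨ψ, hψ⟩ := Triangle.yoneda_exact₃ _ hT φ (hw y hy.1 _)
    have : ψ = 0 := hw _ (hD.shift_mem x hx.1) ψ
    rw [hψ, this]; exact comp_zero
  · intro z hz φ
    -- the second inverse rotation is `y⟦-1⟧ ⟶ c⟦-1⟧ ⟶ x ⟶ y`
    have hT' := inv_rot_of_distTriang _ (inv_rot_of_distTriang _ hT)
    obtain ⟨g, hg⟩ := Triangle.coyoneda_exact₂ _ hT' φ (hm z hz _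
      (comp_comp_eq_zero φ (comp_distTriang_mor_zero₁₂ _ (inv_rot_of_distTriang _ hT))))
    have : g = 0 := hy.2 z hz g
    rw [hg, this]; exact zero_comp

lemma SimpleIn.aisleMono (hD : IsTStructure C D) {σ x : C}
    (hσ : SimpleIn C (heartSet C D) σ) (hx : x ∈ heartSet C D) {φ : σ ⟶ x} (hφ : φ ≠ 0) :
    AisleMono D φ := by
  obtain ⟨G, f, h, hT⟩ := distinguished_cocone_triangle₁ φ
  have hG : G⟦(-1 : ℤ)⟧ ∈ perpSet C D :=
    hD.shift_neg_one_mem_perpSet_of_distTriang hT hσ.1.2 hx.2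
  -- `K` is the kernel of `φ` in the heart
  obtain ⟨K, G', ι, β, γ, hT', hK, hG'⟩ := hD.exists_distTriang_heartSet hG
  have hι : AisleMono D (ι ≫ f) :=
    (aisleMono_mor₁ hT' (hD.shift_neg_one_mem_perpSet hG')).comp (aisleMono_mor₁ hT hx.2)
  obtain ⟨c, n, o, hT''⟩ := distinguished_cocone_triangle (ι ≫ f)
  rcases isZero_or_isZero_of_simpleIn hT'' hσ hK
    (hD.cone_mem_heartSet hT'' hK hσ.1 hι) with hK0 | hc0
  · intro z hz ρ hρ
    obtain ⟨g, hg⟩ := Triangle.coyoneda_exact₂ _ hT ρ hρ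
    obtain ⟨g', hg'⟩ := Triangle.coyoneda_exact₂ _ hT' g (hG' z hz _)
    have : g' = 0 := hK0.eq_of_tgt g' 0
    rw [hg, hg', this, zero_comp]; exact zero_comp
  · have : IsIso (ι ≫ f) := (Triangle.isZero₃_iff_isIso₁ _ hT'').1 hc0
    have hfφ : f ≫ φ = 0 := comp_distTriang_mor_zero₁₂ _ hT
    exact (hφ ((cancel_epi (ι ≫ f)).1 (by rw [assoc, hfφ, comp_zero, comp_zero]))).elim

lemma SimpleIn.isIso_of_ne_zero (hD : IsTStructure C D) {σ τ : C}
    (hσ : SimpleIn C (heartSet C D) σ) (hτ : SimpleIn C (heartSet C D) τ) {χ : σ ⟶ τ}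
    (hχ : χ ≠ 0) : IsIso χ := by
  obtain ⟨c, n, o, hT⟩ := distinguished_cocone_triangle χ
  rcases isZero_or_isZero_of_simpleIn hT hτ hσ.1
    (hD.cone_mem_heartSet hT hσ.1 hτ.1 (hσ.aisleMono hD hτ.1 hχ)) with h | h
  · exact absurd h hσ.2.1
  · exact (Triangle.isZero₃_iff_isIso₁ _ hT).1 h

lemma SimpleIn.exists_isIso_comp_eq (hD : IsTStructure C D) {σ σ₀ a q : C}
    (hσ : SimpleIn C (heartSet C D) σ) (hσ₀ : SimpleIn C (heartSet C D) σ₀)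
    {i : σ₀ ⟶ a} {p : a ⟶ q} {δ : q ⟶ σ₀⟦(1 : ℤ)⟧} (hT : Triangle.mk i p δ ∈ distTriang C)
    {m : σ ⟶ a} (hm : m ≠ 0) (hmp : m ≫ p = 0) : ∃ χ : σ ⟶ σ₀, IsIso χ ∧ χ ≫ i = m := by
  obtain ⟨χ, hχ⟩ := Triangle.coyoneda_exact₂ _ hT m hmp
  refine ⟨χ, hσ.isIso_of_ne_zero hD hσ₀ fun h => hm ?_, hχ.symm⟩
  rw [hχ, h]; exact zero_comp

end AisleMono

section Length

variable {D : Set C}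

lemma exists_hom_iterated_quotients {s' σ₀ a a₂ q₀ qb cb : C} {ψ : s' ⟶ a} {π₂ : a ⟶ a₂}
    {o₂ : a₂ ⟶ s'⟦(1 : ℤ)⟧} (hT₁ : Triangle.mk ψ π₂ o₂ ∈ distTriang C)
    {i₀ : σ₀ ⟶ a} {p₀ : a ⟶ q₀} {h₀ : q₀ ⟶ σ₀⟦(1 : ℤ)⟧} (hT₂ : Triangle.mk i₀ p₀ h₀ ∈ distTriang C)
    {πq : q₀ ⟶ qb} {oq : qb ⟶ s'⟦(1 : ℤ)⟧} (hT₃ : Triangle.mk (ψ ≫ p₀) πq oq ∈ distTriang C)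
    {πc : a₂ ⟶ cb} {oc : cb ⟶ σ₀⟦(1 : ℤ)⟧} (hT₄ : Triangle.mk (i₀ ≫ π₂) πc oc ∈ distTriang C) :
    ∃ θ : qb ⟶ cb, p₀ ≫ πq ≫ θ = π₂ ≫ πc := by
  have h₁ : ψ ≫ π₂ = 0 := comp_distTriang_mor_zero₁₂ _ hT₁
  have h₄ : (i₀ ≫ π₂) ≫ πc = 0 := comp_distTriang_mor_zero₁₂ _ hT₄
  obtain ⟨g, hg⟩ : ∃ g : q₀ ⟶ cb, π₂ ≫ πc = p₀ ≫ g := Triangle.yoneda_exact₂ _ hT₂ _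
    (by show i₀ ≫ π₂ ≫ πc = 0; rw [← assoc, h₄])
  obtain ⟨θ, hθ⟩ : ∃ θ : qb ⟶ cb, g = πq ≫ θ := Triangle.yoneda_exact₂ _ hT₃ g
    (by show (ψ ≫ p₀) ≫ g = 0; rw [assoc, ← hg, ← assoc, h₁, zero_comp])
  exact ⟨θ, by rw [← hθ, hg]⟩

lemma comp_eq_id_of_iterated_quotients {s' σ₀ a q₀ qb cb a₂ : C} (hs' : s' ∈ heartSet C D)
    (hσ₀ : σ₀ ∈ heartSet C D) (hqb : qb ∈ heartSet C D) {ψ : s' ⟶ a}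
    {i₀ : σ₀ ⟶ a} {p₀ : a ⟶ q₀} {h₀ : q₀ ⟶ σ₀⟦(1 : ℤ)⟧} (hT₂ : Triangle.mk i₀ p₀ h₀ ∈ distTriang C)
    {πq : q₀ ⟶ qb} {oq : qb ⟶ s'⟦(1 : ℤ)⟧} (hT₃ : Triangle.mk (ψ ≫ p₀) πq oq ∈ distTriang C)
    {π₂ : a ⟶ a₂} {πc : a₂ ⟶ cb} {θ : qb ⟶ cb} {θ' : cb ⟶ qb}
    (hθ : p₀ ≫ πq ≫ θ = π₂ ≫ πc) (hθ' : π₂ ≫ πc ≫ θ' = p₀ ≫ πq) : θ ≫ θ' = 𝟙 qb := by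
  apply cancel_mor₂_of_distTriang hT₃ (hom_shift_one_eq_zero (hqb.2 _ hs'.1))
  apply cancel_mor₂_of_distTriang hT₂ (hom_shift_one_eq_zero (hqb.2 _ hσ₀.1))
  show p₀ ≫ πq ≫ θ ≫ θ' = p₀ ≫ πq ≫ 𝟙 qb
  rw [reassoc_of% hθ, hθ', comp_id]

/-- The two ways of dividing `a` by the simple subobjects `s'` and `σ₀` agree. -/
lemma nonempty_iso_iterated_quotients {s' σ₀ a a₂ q₀ qb cb : C} (hs' : s' ∈ heartSet C D)
    (hσ₀ : σ₀ ∈ heartSet C D) (hqb : qb ∈ heartSet C D) (hcb : cb ∈ heartSet C D)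
    {ψ : s' ⟶ a} {π₂ : a ⟶ a₂}
    {o₂ : a₂ ⟶ s'⟦(1 : ℤ)⟧} (hT₁ : Triangle.mk ψ π₂ o₂ ∈ distTriang C)
    {i₀ : σ₀ ⟶ a} {p₀ : a ⟶ q₀} {h₀ : q₀ ⟶ σ₀⟦(1 : ℤ)⟧} (hT₂ : Triangle.mk i₀ p₀ h₀ ∈ distTriang C)
    {πq : q₀ ⟶ qb} {oq : qb ⟶ s'⟦(1 : ℤ)⟧} (hT₃ : Triangle.mk (ψ ≫ p₀) πq oq ∈ distTriang C)
    {πc : a₂ ⟶ cb} {oc : cb ⟶ σ₀⟦(1 : ℤ)⟧} (hT₄ : Triangle.mk (i₀ ≫ π₂) πc oc ∈ distTriang C) :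
    Nonempty (qb ≅ cb) := by
  obtain ⟨θ, hθ⟩ := exists_hom_iterated_quotients hT₁ hT₂ hT₃ hT₄
  obtain ⟨θ', hθ'⟩ := exists_hom_iterated_quotients hT₂ hT₁ hT₄ hT₃
  exact ⟨⟨θ, θ', comp_eq_id_of_iterated_quotients hs' hσ₀ hqb hT₂ hT₃ hθ hθ',
    comp_eq_id_of_iterated_quotients hσ₀ hs' hcb hT₁ hT₄ hθ' hθ⟩⟩

inductive LengthLE (A : Set C) : C → ℕ → Prop
  | zero {a : C} {n : ℕ} (h : IsZero a) : LengthLE A a n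
  | step {σ a q : C} {n : ℕ} (hσ : SimpleIn C A σ) (ht : heartTriangle C A σ a q)
      (hq : LengthLE A q n) : LengthLE A a (n + 1)

lemma FiniteLengthIn.exists_lengthLE {A : Set C} {a : C} (h : FiniteLengthIn C A a) :
    ∃ n, LengthLE A a n := by
  induction h with
  | zero h => exact ⟨0, .zero h⟩
  | step hσ _ ht ih =>
    obtain ⟨n, hn⟩ := ih
    exact ⟨n + 1, .step hσ ht hn⟩

lemma LengthLE.isZero {A : Set C} {a : C} (h : LengthLE A a 0) : IsZero a := by
  cases h with
  | zero h => exact h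

lemma LengthLE.of_iso (hD : IsTStructure C D) {x y : C} {n : ℕ} (e : x ≅ y)
    (h : LengthLE (heartSet C D) x n) : LengthLE (heartSet C D) y n := by
  cases h with
  | zero h => exact .zero (h.of_iso e.symm)
  | step hσ ht hq =>
    obtain ⟨h₁, h₂, h₃, i, p, δ, hT⟩ := ht
    exact .step hσ ⟨h₁, hD.mem_heartSet_of_iso e h₂, h₃, _, _, _, distTriang_of_iso_obj₂ e hT⟩ hq

lemma LengthLE.cone_of_simpleIn (hD : IsTStructure C D) {s' a a₂ : C}
    (hs' : SimpleIn C (heartSet C D) s') (ha : a ∈ heartSet C D) {ψ : s' ⟶ a} {π : a ⟶ a₂}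
    {o : a₂ ⟶ s'⟦(1 : ℤ)⟧} (hT : Triangle.mk ψ π o ∈ distTriang C) (hψ : ψ ≠ 0) {n : ℕ}
    (hlen : LengthLE (heartSet C D) a (n + 1)) : LengthLE (heartSet C D) a₂ n := by
  induction n using Nat.strong_induction_on generalizing a a₂ ψ π o with
  | _ n ih =>
    rcases hlen with ⟨ha0⟩ | ⟨hσ₀, ⟨hσ₀A, -, hq₀A, i₀, p₀, h₀, hT₀⟩, hq⟩
    · exact absurd (ha0.eq_of_tgt ψ 0) hψ
    by_cases hψp : ψ ≫ p₀ = 0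
    · -- `s'` is the bottom composition factor `σ₀`, so `a₂ ≅ q₀`
      obtain ⟨χ, _, hχ⟩ := hs'.exists_isIso_comp_eq hD hσ₀ hT₀ hψ hψp
      refine hq.of_iso hD (Triangle.π₃.mapIso
        (isoTriangleOfIso₁₂ _ _ hT₀ hT (asIso χ).symm (Iso.refl a) ?_))
      show i₀ ≫ 𝟙 a = inv χ ≫ ψ
      rw [← hχ, IsIso.inv_hom_id_assoc, comp_id]
    obtain ⟨m, rfl⟩ : ∃ m, n = m + 1 :=
      Nat.exists_eq_succ_of_ne_zero fun h => hψp ((h ▸ hq).isZero.eq_of_tgt _ 0)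
    have ha₂ : a₂ ∈ heartSet C D := hD.cone_mem_heartSet hT hs'.1 ha (hs'.aisleMono hD ha hψ)
    have hiπ : i₀ ≫ π ≠ 0 := fun h => by
      have hi₀ : i₀ ≠ 0 := (aisleMono_mor₁ hT₀ hq₀A.2).ne_zero hσ₀A.1 hσ₀.2.1
      obtain ⟨χ, _, hχ⟩ := hσ₀.exists_isIso_comp_eq hD hs' hT hi₀ h
      have hip : i₀ ≫ p₀ = 0 := comp_distTriang_mor_zero₁₂ _ hT₀
      exact hψp (by rw [← cancel_epi χ, ← assoc, hχ, hip, comp_zero])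
    obtain ⟨qb, πq, oq, hT₃⟩ := distinguished_cocone_triangle (ψ ≫ p₀)
    obtain ⟨cb, πc, oc, hT₄⟩ := distinguished_cocone_triangle (i₀ ≫ π)
    have hqb := hD.cone_mem_heartSet hT₃ hs'.1 hq₀A (hs'.aisleMono hD hq₀A hψp)
    have hcb := hD.cone_mem_heartSet hT₄ hσ₀A ha₂ (hσ₀.aisleMono hD ha₂ hiπ)
    obtain ⟨e⟩ := nonempty_iso_iterated_quotients hs'.1 hσ₀A hqb hcb hT hT₀ hT₃ hT₄
    exact .step hσ₀ ⟨hσ₀A, ha₂, hcb, _, _, _, hT₄⟩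
      ((ih m (Nat.lt_succ_self m) hq₀A hT₃ hψp hq).of_iso hD e)

end Length

section Torsion

lemma HeartExt.mem {A S : Set C} (hS : S ⊆ A) {x : C} (h : HeartExt C A S x) : x ∈ A := by
  induction h with
  | of h => exact hS h
  | zero _ hA => exact hA
  | iso _ hy _ _ => exact hy
  | ext _ _ h _ _ => exact h.2.1

lemma perpIn_heartExt (A S : Set C) : perpIn C A {c | HeartExt C A S c} = perpIn C A S := by
  ext a
  refine ⟨fun ⟨ha, h⟩ => ⟨ha, fun t ht => h t (.of ht)⟩,
    fun ⟨ha, h⟩ => ⟨ha, fun τ (hτ : HeartExt C A S τ) => ?_⟩⟩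
  induction hτ with
  | of ht => exact h _ ht
  | zero h0 _ => exact fun φ => h0.eq_of_src φ 0
  | iso e _ _ ih => exact fun φ => by simpa using congrArg (e.inv ≫ ·) (ih (e.hom ≫ φ))
  | ext _ _ ht ih₁ ih₂ =>
    obtain ⟨-, -, -, i, p, δ, hT⟩ := ht
    exact hom_obj₂_eq_zero_of_distTriang hT ih₁ ih₂

variable {D : Set C}

omit [HasZeroObject C] [∀ n : ℤ, (shiftFunctor C n).Additive] [Pretriangulated C] in
lemma mem_perpIn_of_aisleMono {S : Set C} (hS : S ⊆ D) {σ e : C}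
    (he : e ∈ perpIn C (heartSet C D) S) (hσ : σ ∈ heartSet C D) {j : σ ⟶ e}
    (hj : AisleMono D j) : σ ∈ perpIn C (heartSet C D) S :=
  ⟨hσ, fun t ht φ => hj t (hS ht) φ (he.2 t ht _)⟩

/-- Divide `a` by a copy of `s`, which shortens it: if `m` dies in the quotient, it factors
through `s` and Schur's lemma turns its source into `s`. -/
lemma IsTStructure.hom_eq_zero_of_simpleIn_perpIn (hD : IsTStructure C D) {s σ : C}
    (hs : SimpleIn C (heartSet C D) s) (hσ : SimpleIn C (heartSet C D) σ)
    (hσs : σ ∈ perpIn C (heartSet C D) {s}) {n : ℕ} {a : C} (ha : a ∈ heartSet C D)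
    (hlen : LengthLE (heartSet C D) a n)
    (ha' : ∀ y ∈ perpIn C (heartSet C D) {s}, ∀ ξ : a ⟶ y, ξ = 0) (m : σ ⟶ a) : m = 0 := by
  induction n generalizing a with
  | zero => exact hlen.isZero.eq_of_tgt m 0
  | succ n ih =>
    by_contra hm
    obtain ⟨ψ, hψ⟩ : ∃ ψ : s ⟶ a, ψ ≠ 0 := by
      by_contra! h
      have ha0 : IsZero a := (IsZero.iff_id_eq_zero a).2 <|
        ha' a ⟨ha, fun t ht => Set.mem_singleton_iff.1 ht ▸ h⟩ (𝟙 a)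
      exact hm (ha0.eq_of_tgt m 0)
    obtain ⟨a₂, π, o, hT⟩ := distinguished_cocone_triangle ψ
    have ha₂ := hD.cone_mem_heartSet hT hs.1 ha (hs.aisleMono hD ha hψ)
    have hmπ : m ≫ π = 0 := ih ha₂ (hlen.cone_of_simpleIn hD hs ha hT hψ)
      (fun y hy => hom_obj₃_eq_zero_of_distTriang hT (hom_shift_one_eq_zero (hy.1.2 s hs.1.1))
        (ha' y hy)) _
    obtain ⟨χ, _, -⟩ := hσ.exists_isIso_comp_eq hD hs hT hm hmπ
    refine hσ.2.1 ((IsZero.iff_id_eq_zero σ).2 ?_)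
    rw [← IsIso.hom_inv_id χ, hσs.2 s rfl (inv χ), comp_zero]

lemma IsTStructure.isZero_of_aisleMono (hD : IsTStructure C D)
    (hfl : ∀ a ∈ heartSet C D, FiniteLengthIn C (heartSet C D) a) {s : C}
    (hs : SimpleIn C (heartSet C D) s) {a : C} (ha : a ∈ heartSet C D)
    (ha' : ∀ y ∈ perpIn C (heartSet C D) {s}, ∀ ξ : a ⟶ y, ξ = 0) {e : C}
    (he : e ∈ perpIn C (heartSet C D) {s}) {m : e ⟶ a} (hm : AisleMono D m) : IsZero e := by
  by_contra he0
  -- a composition series of `e` provides a simple subobject `σ`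
  obtain he0' | ⟨hσ, -, ⟨hσA, -, hqA, j, p, δ, hT⟩⟩ := hfl e he.1
  · exact he0 he0'
  have hj : AisleMono D j := aisleMono_mor₁ hT hqA.2
  have hσs := mem_perpIn_of_aisleMono (Set.singleton_subset_iff.2 hs.1.1) he hσA hj
  obtain ⟨n, hn⟩ := (hfl a ha).exists_lengthLE
  exact (hj.comp hm).ne_zero hσA.1 hσ.2.1 (hD.hom_eq_zero_of_simpleIn_perpIn hs hσ hσs ha hn ha' _)

end Torsion

section Tilt

variable {D T : Set C}

lemma IsTStructure.mem_perpIn_of_iso (hD : IsTStructure C D) {x y : C} (e : x ≅ y)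
    (hx : x ∈ perpIn C (heartSet C D) T) : y ∈ perpIn C (heartSet C D) T :=
  ⟨hD.mem_heartSet_of_iso e hx.1, mem_perpSet_of_iso e hx.2⟩

lemma leftTilt_subset_perpSet (hTA : T ⊆ heartSet C D) :
    leftTilt C (heartSet C D) T ⊆ perpSet C T := by
  intro x hx
  change ExtClosure C _ x at hx
  induction hx with
  | of h =>
    rcases h with hF | hT
    · exact hF.2
    · exact fun t ht => mem_perpSet_of_shift_one_mem_heartSet
        (hTA (mem_shiftSet_neg_one_iff.1 hT)) t (hTA ht).1
  | zero h => exact zero_mem_perpSet h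
  | iso e _ ih => exact mem_perpSet_of_iso e ih
  | ext _ _ _ hT _ _ ih₁ ih₃ => exact mem_perpSet_of_distTriang hT ih₁ ih₃

lemma IsTStructure.shift_neg_one_mem_perpSet_of_mem_leftTilt (hD : IsTStructure C D)
    (hTA : T ⊆ heartSet C D) {x : C} (hx : x ∈ leftTilt C (heartSet C D) T) :
    x⟦(-1 : ℤ)⟧ ∈ perpSet C D := by
  change ExtClosure C _ x at hx
  induction hx with
  | of h =>
    rcases h with hF | hT
    · exact hF.1.2
    · exact hD.shift_neg_one_mem_perpSet
        (mem_perpSet_of_shift_one_mem_heartSet (hTA (mem_shiftSet_neg_one_iff.1 hT)))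
  | zero h => exact zero_mem_perpSet ((shiftFunctor C (-1 : ℤ)).map_isZero h)
  | iso e _ ih => exact mem_perpSet_of_iso ((shiftFunctor C (-1 : ℤ)).mapIso e) ih
  | ext _ _ _ hT _ _ ih₁ ih₃ =>
    exact mem_perpSet_of_distTriang (Triangle.shift_distinguished _ hT (-1)) ih₁ ih₃

lemma IsTStructure.shift_one_mem_of_mem_leftTilt (hD : IsTStructure C D)
    (hTA : T ⊆ heartSet C D) {x : C} (hx : x ∈ leftTilt C (heartSet C D) T) :
    x⟦(1 : ℤ)⟧ ∈ D := by
  change ExtClosure C _ x at hx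
  induction hx with
  | of h =>
    rcases h with hF | hT
    · exact hD.shift_mem _ hF.1.1
    · exact (hTA (mem_shiftSet_neg_one_iff.1 hT)).1
  | zero h => exact hD.zero_mem ((shiftFunctor C (1 : ℤ)).map_isZero h)
  | iso e _ ih => exact hD.isoClosed ((shiftFunctor C (1 : ℤ)).mapIso e) ih
  | ext _ _ _ hT _ _ ih₁ ih₃ =>
    exact hD.mem_of_distTriang (Triangle.shift_distinguished _ hT 1) ih₁ ih₃

lemma hom_shift_one_eq_zero_of_mem_leftTilt {x : C} (hx : x ∈ leftTilt C (heartSet C D) T)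
    {y : C} (hy : y ∈ perpIn C (heartSet C D) T) : ∀ φ : x⟦(1 : ℤ)⟧ ⟶ y, φ = 0 := by
  change ExtClosure C _ x at hx
  induction hx with
  | of h =>
    rcases h with hF | hT
    · exact hom_shift_one_eq_zero (hy.1.2 _ hF.1.1)
    · exact hy.2 _ (mem_shiftSet_neg_one_iff.1 hT)
  | zero h => exact fun φ => ((shiftFunctor C (1 : ℤ)).map_isZero h).eq_of_src φ 0
  | iso e _ ih =>
    exact fun φ => by
      simpa using congrArg ((shiftFunctor C (1 : ℤ)).map e.inv ≫ ·)
        (ih ((shiftFunctor C (1 : ℤ)).map e.hom ≫ φ))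
  | ext _ _ _ hT _ _ ih₁ ih₃ =>
    exact hom_obj₂_eq_zero_of_distTriang (Triangle.shift_distinguished _ hT 1) ih₁ ih₃

lemma IsTStructure.shift_neg_one_mem_leftTilt (hD : IsTStructure C D) {S : Set C} {τ : C}
    (hτ : HeartExt C (heartSet C D) S τ) (hτA : τ ∈ heartSet C D) :
    τ⟦(-1 : ℤ)⟧ ∈ leftTilt C (heartSet C D) {c | HeartExt C (heartSet C D) S c} :=
  ExtClosure.of (Or.inr (mem_shiftSet_neg_one_iff.2
    (HeartExt.iso (shiftNegShift τ (1 : ℤ)).symm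
      (hD.mem_heartSet_of_iso (shiftNegShift τ (1 : ℤ)).symm hτA) hτ)))

end Tilt

section TiltSimples

variable {D : Set C}

lemma exists_iso_of_simpleIn_extClosure {S : Set C} {x : C}
    (hx : SimpleIn C {c | ExtClosure C S c} x) : ∃ y ∈ S, Nonempty (x ≅ y) := by
  have hmem : ExtClosure C S x := hx.1
  induction hmem with
  | of h => exact ⟨_, h, ⟨Iso.refl _⟩⟩
  | zero h => exact absurd h hx.2.1
  | iso e h ih =>
    obtain ⟨y, hy, ⟨e'⟩⟩ := ih (hx.of_iso e h)
    exact ⟨y, hy, ⟨e.symm ≪≫ e'⟩⟩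
  | ext f g _ hT ha hc iha ihc =>
    rcases isZero_or_isZero_of_simpleIn hT hx ha hc with h | h
    · have : IsIso g := (Triangle.isZero₁_iff_isIso₂ _ hT).1 h
      obtain ⟨y, hy, ⟨e'⟩⟩ := ihc (hx.of_iso (asIso g).symm hc)
      exact ⟨y, hy, ⟨asIso g ≪≫ e'⟩⟩
    · have : IsIso f := (Triangle.isZero₃_iff_isIso₁ _ hT).1 h
      obtain ⟨y, hy, ⟨e'⟩⟩ := iha (hx.of_iso (asIso f) ha)
      exact ⟨y, hy, ⟨(asIso f).symm ≪≫ e'⟩⟩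

lemma IsTStructure.exists_iso_of_simpleIn_shift_neg_one (hD : IsTStructure C D) {S : Set C}
    (hS : S ⊆ heartSet C D) {τ : C} (hτ : HeartExt C (heartSet C D) S τ)
    (hτ' : SimpleIn C (leftTilt C (heartSet C D) {c | HeartExt C (heartSet C D) S c})
      (τ⟦(-1 : ℤ)⟧)) : ∃ σ ∈ S, Nonempty (τ ≅ σ) := by
  induction hτ with
  | of h => exact ⟨_, h, ⟨Iso.refl _⟩⟩
  | zero h _ => exact absurd ((shiftFunctor C (-1 : ℤ)).map_isZero h) hτ'.2.1
  | iso e _ h ih =>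
    obtain ⟨σ, hσ, ⟨e'⟩⟩ := ih (hτ'.of_iso ((shiftFunctor C (-1 : ℤ)).mapIso e)
      (hD.shift_neg_one_mem_leftTilt h (h.mem hS)))
    exact ⟨σ, hσ, ⟨e.symm ≪≫ e'⟩⟩
  | ext ht hf hext ih₁ ih₂ =>
    obtain ⟨htA, -, hfA, i, p, δ, hT⟩ := hext
    have ht' := hD.shift_neg_one_mem_leftTilt ht htA
    have hf' := hD.shift_neg_one_mem_leftTilt hf hfA
    rcases isZero_or_isZero_of_simpleIn (Triangle.shift_distinguished _ hT (-1)) hτ' ht' hf'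
      with h | h
    · have : IsIso p := (Triangle.isZero₁_iff_isIso₂ _ hT).1 (isZero_of_isZero_shift _ h)
      obtain ⟨σ, hσ, ⟨e'⟩⟩ := ih₂ (hτ'.of_iso ((shiftFunctor C (-1 : ℤ)).mapIso (asIso p)).symm hf')
      exact ⟨σ, hσ, ⟨asIso p ≪≫ e'⟩⟩
    · have : IsIso i := (Triangle.isZero₃_iff_isIso₁ _ hT).1 (isZero_of_isZero_shift _ h)
      obtain ⟨σ, hσ, ⟨e'⟩⟩ := ih₁ (hτ'.of_iso ((shiftFunctor C (-1 : ℤ)).mapIso (asIso i)) ht')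
      exact ⟨σ, hσ, ⟨(asIso i).symm ≪≫ e'⟩⟩

lemma IsTStructure.exists_iso_or_mem_perpIn_of_simpleIn_leftTilt (hD : IsTStructure C D)
    {S : Set C} (hS : S ⊆ heartSet C D) {x : C}
    (hx : SimpleIn C (leftTilt C (heartSet C D) {c | HeartExt C (heartSet C D) S c}) x) :
    (∃ σ ∈ S, Nonempty (x ≅ σ⟦(-1 : ℤ)⟧)) ∨
      x ∈ perpIn C (heartSet C D) {c | HeartExt C (heartSet C D) S c} := by
  obtain ⟨y, hy | hy, ⟨e⟩⟩ := exists_iso_of_simpleIn_extClosure hx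
  · exact Or.inr (hD.mem_perpIn_of_iso e.symm hy)
  · rw [mem_shiftSet_neg_one_iff] at hy
    have hy' := hD.shift_neg_one_mem_leftTilt hy (hy.mem hS)
    obtain ⟨σ, hσ, ⟨e'⟩⟩ := hD.exists_iso_of_simpleIn_shift_neg_one hS hy
      (hx.of_iso (shiftShiftNeg y (1 : ℤ) ≪≫ e.symm) hy')
    exact Or.inl ⟨σ, hσ,
      ⟨e ≪≫ (shiftShiftNeg y (1 : ℤ)).symm ≪≫ (shiftFunctor C (-1 : ℤ)).mapIso e'⟩⟩

lemma IsTStructure.mem_perpSet_of_distTriang_shift_neg_one (hD : IsTStructure C D)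
    (hfl : ∀ a ∈ heartSet C D, FiniteLengthIn C (heartSet C D) a) {s t f : C}
    (hs : SimpleIn C (heartSet C D) s) {u : t ⟶ s⟦(-1 : ℤ)⟧} {v : s⟦(-1 : ℤ)⟧ ⟶ f}
    {w : f ⟶ t⟦(1 : ℤ)⟧} (hT : Triangle.mk u v w ∈ distTriang C)
    (ht : t ∈ leftTilt C (heartSet C D) {c | HeartExt C (heartSet C D) {s} c})
    (ht₁ : t⟦(1 : ℤ)⟧ ∈ heartSet C D)
    (hf : f ∈ leftTilt C (heartSet C D) {c | HeartExt C (heartSet C D) {s} c}) :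
    f ∈ perpSet C D := by
  have hTA : {c | HeartExt C (heartSet C D) {s} c} ⊆ heartSet C D :=
    fun _ => HeartExt.mem (Set.singleton_subset_iff.2 hs.1)
  -- `K` is the zeroth cohomology of `f`, a subobject of `t⟦1⟧` lying in `s^⊥`
  obtain ⟨K, d', α, β, γ, hT', hK, hd'⟩ :=
    hD.exists_distTriang_heartSet (hD.shift_neg_one_mem_perpSet_of_mem_leftTilt hTA hf)
  have hα : AisleMono D α := aisleMono_mor₁ hT' (hD.shift_neg_one_mem_perpSet hd')
  have hw : AisleMono D w := aisleMono_mor₁ (rot_of_distTriang _ (rot_of_distTriang _ hT))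
    (mem_perpSet_of_iso (shiftShiftNeg _ (1 : ℤ)).symm hs.1.2)
  have hKs : K ∈ perpIn C (heartSet C D) {s} := ⟨hK, fun _ h φ => by
    obtain rfl := Set.mem_singleton_iff.1 h
    exact hα _ hs.1.1 φ (leftTilt_subset_perpSet hTA hf _ (.of rfl) _)⟩
  have hK0 : IsZero K := hD.isZero_of_aisleMono hfl hs ht₁
    (fun y hy => hom_shift_one_eq_zero_of_mem_leftTilt ht (by rwa [perpIn_heartExt]))
    hKs (hα.comp hw)
  have : IsIso β := (Triangle.isZero₁_iff_isIso₂ _ hT').1 hK0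
  exact mem_perpSet_of_iso (asIso β).symm hd'

lemma IsTStructure.simpleIn_leftTilt_shift_neg_one (hD : IsTStructure C D)
    (hfl : ∀ a ∈ heartSet C D, FiniteLengthIn C (heartSet C D) a) {s : C}
    (hs : SimpleIn C (heartSet C D) s) :
    SimpleIn C (leftTilt C (heartSet C D) {c | HeartExt C (heartSet C D) {s} c})
      (s⟦(-1 : ℤ)⟧) := by
  have hTA : {c | HeartExt C (heartSet C D) {s} c} ⊆ heartSet C D :=
    fun _ => HeartExt.mem (Set.singleton_subset_iff.2 hs.1)
  refine ⟨hD.shift_neg_one_mem_leftTilt (.of rfl) hs.1,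
    fun h => hs.2.1 (isZero_of_isZero_shift _ h), fun t f ⟨ht, _, hf, u, v, w, hT⟩ => ?_⟩
  have ht' : t ∈ perpSet C D := mem_perpSet_of_distTriang (inv_rot_of_distTriang _ hT)
    (hD.shift_neg_one_mem_perpSet_of_mem_leftTilt hTA hf) hs.1.2
  have ht₁ := shift_one_mem_heartSet (hD.shift_one_mem_of_mem_leftTilt hTA ht) ht'
  have hf₁ := shift_one_mem_heartSet (hD.shift_one_mem_of_mem_leftTilt hTA hf)
    (hD.mem_perpSet_of_distTriang_shift_neg_one hfl hs hT ht ht₁ hf)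
  -- shifted by one, the triangle is a short exact sequence `t⟦1⟧ ↪ s ↠ f⟦1⟧` of the heart
  have hs' := hs.of_iso (shiftNegShift s (1 : ℤ))
    (hD.mem_heartSet_of_iso (shiftNegShift s (1 : ℤ)).symm hs.1)
  exact (isZero_or_isZero_of_simpleIn (Triangle.shift_distinguished _ hT 1) hs' ht₁ hf₁).imp
    (isZero_of_isZero_shift _) (isZero_of_isZero_shift _)

end TiltSimples

theorem simple_tilt_simples_general (D : Set C) (hD : IsTStructure C D)
    (hfl : ∀ a ∈ heartSet C D, FiniteLengthIn C (heartSet C D) a)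
    (s : C) (hs : SimpleIn C (heartSet C D) s) :
    SimpleIn C
      (leftTilt C (heartSet C D) {c : C | HeartExt C (heartSet C D) {s} c})
      (s⟦(-1 : ℤ)⟧) ∧
    ∀ x : C,
      SimpleIn C
        (leftTilt C (heartSet C D) {c : C | HeartExt C (heartSet C D) {s} c}) x →
      Nonempty (x ≅ s⟦(-1 : ℤ)⟧) ∨
        x ∈ perpIn C (heartSet C D) {c : C | HeartExt C (heartSet C D) {s} c} := by
  refine ⟨hD.simpleIn_leftTilt_shift_neg_one hfl hs, fun x hx => ?_⟩
  obtain ⟨σ, rfl, e⟩ | hF :=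
    hD.exists_iso_or_mem_perpIn_of_simpleIn_leftTilt (Set.singleton_subset_iff.2 hs.1) hx
  · exact Or.inl e
  · exact Or.inr hF

/-- For a simple object `s` of a finite-length heart `A`, with `⟨s⟩` the
extension closure of `{s}` in `A`, the object `s[-1]` is simple in the left tilt
`L_s A = ⟨⟨s⟩^⊥, ⟨s⟩[-1]⟩`, and every other simple object of `L_s A` lies in `⟨s⟩^⊥`. -/
theorem simple_tilt_simples (D : Set C) (hD : IsTStructure C D) (hDb : IsBounded C D)
    (hfl : ∀ a ∈ heartSet C D, FiniteLengthIn C (heartSet C D) a)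
    (s : C) (hs : SimpleIn C (heartSet C D) s) :
    SimpleIn C
      (leftTilt C (heartSet C D) {c : C | HeartExt C (heartSet C D) {s} c})
      (s⟦(-1 : ℤ)⟧) ∧
    ∀ x : C,
      SimpleIn C
        (leftTilt C (heartSet C D) {c : C | HeartExt C (heartSet C D) {s} c}) x →
      Nonempty (x ≅ s⟦(-1 : ℤ)⟧) ∨
        x ∈ perpIn C (heartSet C D) {c : C | HeartExt C (heartSet C D) {s} c} :=
  simple_tilt_simples_general D hD hfl s hs

end Paper
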